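/- Let L be a regular language over an alphabet Σ whose root √L is infinite. Then the square L^(2) = {p² : p ∈ L} is not a regular language. -/

import Mathlib

/-
Let `M` be a DFA for `L⁽²⁾`. If `u, v ∈ L` drive `M` to the same state, then `uv ∈ L⁽²⁾` because
`vv` is, so `uv = xx` for some `x ∈ L`; when `|u| ≤ |v|` this forces `v = s u s`.
Among the words of `L` sending `M` to a common state there are infinitely many roots. Take the
shortest such word `u`: every other one is `s u s`, and comparing two of them shows that all these
`s` commute, so they are powers of one primitive word `g`, and `gᵃ u gᵇ ∈ L` for all exponents
`a, b` that occur. Since `M` has finitely many states, two exponents `a ≠ b` make `gᵃ` and `gᵇ`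
act identically on the states; then `gᵃ u gᵇ` and `gᵇ u gᵃ` are words of `L` of equal length in the
same state, hence equal, so `u` commutes with a power of `g`. Then every word of the family is a
power of `g`, and the family has the single root `g`.
-/

/-- `wpow v n` is the word `vⁿ`, the `n`-fold concatenation of the word `v` with itself. -/
def wpow {α : Type*} (v : List α) : ℕ → List α
  | 0 => []
  | n + 1 => v ++ wpow v n

/-- A nonempty word `u` is primitive if `u = vⁿ` implies `n = 1`. -/
def Primitive {α : Type*} (u : List α) : Prop :=
  u ≠ [] ∧ ∀ (v : List α) (n : ℕ), u = wpow v n → n = 1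

/-- The root of a language: the set of primitive roots `√u` of the nonempty words `u ∈ L`. -/
def langRoot {α : Type*} (L : Language α) : Language α :=
  {p : List α | Primitive p ∧ ∃ u ∈ L, ∃ d : ℕ, 1 ≤ d ∧ u = wpow p d}

section Words

variable {α : Type*}

@[simp] lemma wpow_zero (v : List α) : wpow v 0 = [] := rfl

lemma wpow_succ (v : List α) (n : ℕ) : wpow v (n + 1) = v ++ wpow v n := rfl

@[simp] lemma wpow_one (v : List α) : wpow v 1 = v := List.append_nil v

lemma wpow_add (v : List α) (a b : ℕ) : wpow v (a + b) = wpow v a ++ wpow v b := by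
  induction a with
  | zero => simp
  | succ a ih => rw [Nat.succ_add, wpow_succ, wpow_succ, ih, List.append_assoc]

lemma wpow_append_comm (v : List α) (a b : ℕ) :
    wpow v a ++ wpow v b = wpow v b ++ wpow v a := by
  rw [← wpow_add, ← wpow_add, Nat.add_comm]

lemma wpow_mul (v : List α) (a b : ℕ) : wpow v (a * b) = wpow (wpow v a) b := by
  induction b with
  | zero => rfl
  | succ b ih => rw [Nat.mul_succ, wpow_add, wpow_append_comm, ih, wpow_succ]

@[simp] lemma length_wpow (v : List α) (n : ℕ) : (wpow v n).length = n * v.length := by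
  induction n with
  | zero => simp
  | succ n ih => simp [wpow_succ, ih, Nat.succ_mul, Nat.add_comm]

@[simp] lemma wpow_eq_nil_iff {v : List α} {n : ℕ} : wpow v n = [] ↔ v = [] ∨ n = 0 := by
  rw [← List.length_eq_zero_iff, length_wpow, Nat.mul_eq_zero, List.length_eq_zero_iff, or_comm]

lemma prefix_wpow (v : List α) {n : ℕ} (hn : 0 < n) : v <+: wpow v n := by
  obtain ⟨n, rfl⟩ := Nat.exists_eq_add_of_lt hn
  exact List.prefix_append v _

lemma append_self_injective : Function.Injective (fun x : List α => x ++ x) := by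
  intro x y h
  have hl : x.length = y.length := by
    have := congrArg List.length h
    simp only [List.length_append] at this
    omega
  exact (List.append_inj h hl).1

lemma exists_eq_append_append_of_append_eq_append_self {u v x : List α} (h : u ++ v = x ++ x)
    (hl : u.length ≤ v.length) : ∃ s, v = s ++ u ++ s := by
  have hux : u.length ≤ x.length := by
    have := congrArg List.length h
    simp only [List.length_append] at this
    omega
  obtain ⟨s, rfl⟩ : u <+: x :=
    List.prefix_of_prefix_length_le (h ▸ List.prefix_append u v) (List.prefix_append x x) hux
  exact ⟨s, List.append_cancel_left (h.trans (by simp))⟩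

lemma append_comm_of_append_append_eq {s s' t u : List α}
    (h : s' ++ u ++ s' = t ++ (s ++ u ++ s) ++ t) : s ++ s' = s' ++ s := by
  have hl : s'.length = t.length + s.length := by
    have := congrArg List.length h
    simp only [List.length_append] at this
    omega
  have hpre : s' = t ++ s :=
    (List.append_inj (t₁ := u ++ s') (t₂ := u ++ s ++ t) (by simpa using h) (by simp [hl])).1
  have hsuf : s' = s ++ t :=
    (List.append_inj' (s₁ := s' ++ u) (s₂ := t ++ s ++ u) (by simpa using h)
      (by simp [hl, Nat.add_comm])).2
  calc s ++ s' = s ++ t ++ s := by rw [hpre, List.append_assoc]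
    _ = s' ++ s := by rw [hsuf]

lemma append_wpow_comm_of_wpow_append_append_wpow_eq {g u : List α} {a b : ℕ} (hab : a ≤ b)
    (h : wpow g a ++ u ++ wpow g b = wpow g b ++ u ++ wpow g a) :
    u ++ wpow g (b - a) = wpow g (b - a) ++ u := by
  obtain ⟨c, rfl⟩ := Nat.exists_eq_add_of_le hab
  rw [Nat.add_sub_cancel_left]
  have h' : wpow g a ++ (u ++ wpow g c ++ wpow g a) = wpow g a ++ (wpow g c ++ u ++ wpow g a) :=
    calc _ = wpow g a ++ u ++ wpow g (a + c) := by
          simp only [wpow_add, List.append_assoc, wpow_append_comm g c a]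
      _ = wpow g (a + c) ++ u ++ wpow g a := h
      _ = _ := by simp only [wpow_add, List.append_assoc]
  exact List.append_cancel_right (List.append_cancel_left h')

lemma wpow_append_append_wpow_sq (g u : List α) (a b : ℕ) :
    (wpow g a ++ u ++ wpow g a) ++ (wpow g b ++ u ++ wpow g b) =
      (wpow g a ++ u ++ wpow g b) ++ (wpow g a ++ u ++ wpow g b) := by
  simp only [List.append_assoc]
  rw [← List.append_assoc (wpow g a) (wpow g b), wpow_append_comm, List.append_assoc]

theorem exists_wpow_of_append_comm {x y : List α} (h : x ++ y = y ++ x) :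
    ∃ t a b, x = wpow t a ∧ y = wpow t b := by
  induction hn : x.length + y.length using Nat.strong_induction_on generalizing x y with
  | _ n ih =>
  wlog hle : x.length ≤ y.length generalizing x y
  · obtain ⟨t, a, b, hx, hy⟩ := this h.symm (by omega) (by omega)
    exact ⟨t, b, a, hy, hx⟩
  by_cases hx : x = []
  · exact ⟨y, 0, 1, hx, (wpow_one y).symm⟩
  obtain ⟨c, rfl⟩ : x <+: y :=
    List.prefix_of_prefix_length_le (h ▸ List.prefix_append x y) (List.prefix_append y x) hle
  have hc : x ++ c = c ++ x := by simpa using h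
  have hlen : x.length + c.length < n := by
    have := List.length_pos_iff.2 hx
    simp only [List.length_append] at hn
    omega
  obtain ⟨t, a, b, rfl, rfl⟩ := ih _ hlen hc rfl
  exact ⟨t, a, a + b, rfl, (wpow_add t a b).symm⟩

theorem exists_primitive_wpow_eq {w : List α} (hw : w ≠ []) :
    ∃ p n, Primitive p ∧ 0 < n ∧ w = wpow p n := by
  induction hN : w.length using Nat.strong_induction_on generalizing w with
  | _ N ih =>
  by_cases hw' : Primitive w
  · exact ⟨w, 1, hw', one_pos, (wpow_one w).symm⟩
  obtain ⟨v, k, rfl, hk⟩ : ∃ v k, w = wpow v k ∧ k ≠ 1 := by simpa [Primitive, hw] using hw'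
  obtain ⟨hv, hk0⟩ : v ≠ [] ∧ k ≠ 0 := by simpa [not_or] using hw
  have hlen : v.length < N := by
    rw [← hN, length_wpow]
    exact lt_mul_left (List.length_pos_iff.2 hv) (by omega)
  obtain ⟨p, n, hp, hn, rfl⟩ := ih _ hlen hv rfl
  exact ⟨p, n * k, hp, Nat.mul_pos hn (Nat.pos_of_ne_zero hk0), (wpow_mul p n k).symm⟩

theorem append_comm_of_wpow_eq_wpow {p r : List α} {a b : ℕ} (ha : 0 < a) (hb : 0 < b)
    (h : wpow p a = wpow r b) : p ++ r = r ++ p := by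
  -- both are the prefix of length `|p| + |r|` of `w ++ w`, where `w = pᵃ = rᵇ`
  have hprefix : ∀ {x y : List α} {m n : ℕ}, 0 < m → 0 < n → wpow x m = wpow y n →
      x ++ y <+: wpow x m ++ wpow x m := by
    intro x y m n hm hn hxy
    calc x ++ y <+: x ++ wpow x m := (List.prefix_append_right_inj x).2 (hxy ▸ prefix_wpow y hn)
      _ = wpow x m ++ x := by simpa using wpow_append_comm x 1 m
      _ <+: wpow x m ++ wpow x m := (List.prefix_append_right_inj _).2 (prefix_wpow x hm)
  have hpr := hprefix ha hb h
  have hrp := h ▸ hprefix hb ha h.symm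
  exact (List.prefix_of_prefix_length_le hpr hrp (by simp [Nat.add_comm])).eq_of_length
    (by simp [Nat.add_comm])

theorem Primitive.eq_of_wpow_eq_wpow {p r : List α} {a b : ℕ} (hp : Primitive p)
    (hr : Primitive r) (ha : 0 < a) (hb : 0 < b) (h : wpow p a = wpow r b) : p = r := by
  obtain ⟨t, i, j, rfl, rfl⟩ := exists_wpow_of_append_comm (append_comm_of_wpow_eq_wpow ha hb h)
  rw [hp.2 t i rfl, hr.2 t j rfl]

theorem Primitive.exists_eq_wpow_of_append_comm {g x : List α} {k : ℕ} (hg : Primitive g)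
    (hk : 0 < k) (h : x ++ wpow g k = wpow g k ++ x) : ∃ e, x = wpow g e := by
  obtain ⟨t, i, j, rfl, hj⟩ := exists_wpow_of_append_comm h
  have hne : wpow t j ≠ [] := hj ▸ by simp [hg.1, hk.ne']
  obtain ⟨ht, hj0⟩ : t ≠ [] ∧ j ≠ 0 := by simpa [not_or] using hne
  obtain ⟨ρ, γ, hρ, hγ, rfl⟩ := exists_primitive_wpow_eq ht
  rw [← wpow_mul] at hj
  obtain rfl := hρ.eq_of_wpow_eq_wpow hg (Nat.mul_pos hγ (Nat.pos_of_ne_zero hj0)) hk hj.symm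
  exact ⟨γ * i, (wpow_mul ρ γ i).symm⟩

lemma langRoot_finite {L : Language α} (hL : Set.Finite L) : (langRoot L).Finite := by
  refine (hL.biUnion (t := fun u => {p | Primitive p ∧ ∃ d, 0 < d ∧ u = wpow p d})
    fun u _ => Set.Subsingleton.finite ?_).subset ?_
  · rintro p ⟨hp, d, hd, rfl⟩ r ⟨hr, d', hd', h⟩
    exact hp.eq_of_wpow_eq_wpow hr hd hd' h
  · rintro p ⟨hp, u, hu, d, hd, rfl⟩
    exact Set.mem_biUnion hu ⟨hp, d, hd, rfl⟩

lemma langRoot_subsingleton {L : Language α} {g : List α} (hg : Primitive g)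
    (h : ∀ u ∈ L, ∃ n, u = wpow g n) : Set.Subsingleton (langRoot L) := by
  suffices ∀ p ∈ langRoot L, p = g from fun p hp r hr => (this p hp).trans (this r hr).symm
  rintro p ⟨hp, u, hu, d, hd, rfl⟩
  obtain ⟨n, hn⟩ := h _ hu
  have hn0 : n ≠ 0 := by
    rintro rfl
    simp [hp.1] at hn
    omega
  exact hp.eq_of_wpow_eq_wpow hg hd (Nat.pos_of_ne_zero hn0) hn

lemma exists_langRoot_fiber_infinite {ι : Type*} [Finite ι] {L : Language α} (f : List α → ι)
    (h : (langRoot L).Infinite) : ∃ i, (langRoot {u ∈ L | f u = i}).Infinite := by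
  by_contra! hfin
  refine h ((Set.finite_iUnion fun i => Set.not_infinite.1 (hfin i)).subset ?_)
  rintro p ⟨hp, u, hu, d, hd, rfl⟩
  exact Set.mem_iUnion.2 ⟨f _, hp, _, ⟨hu, rfl⟩, d, hd, rfl⟩

end Words

section Automaton

variable {α σ : Type*} {M : DFA α σ} {L : Language α}

def squares (L : Language α) : Language α := {w | ∃ p ∈ L, w = p ++ p}

lemma exists_append_eq_append_self_of_eval_eq (hM : M.accepts = squares L) {u v : List α}
    (hv : v ∈ L) (h : M.eval u = M.eval v) : ∃ x ∈ L, u ++ v = x ++ x := by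
  have hvv : v ++ v ∈ M.accepts := hM ▸ ⟨v, hv, rfl⟩
  have huv : u ++ v ∈ M.accepts := by
    rwa [DFA.mem_accepts, DFA.eval, DFA.evalFrom_of_append, ← DFA.eval, h, DFA.eval,
      ← DFA.evalFrom_of_append] at *
  rwa [hM] at huv

lemma exists_eq_append_append_of_eval_eq (hM : M.accepts = squares L) {v w : List α}
    (hw : w ∈ L) (h : M.eval v = M.eval w) (hl : v.length ≤ w.length) :
    ∃ s, w = s ++ v ++ s := by
  obtain ⟨x, -, hx⟩ := exists_append_eq_append_self_of_eval_eq hM hw h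
  exact exists_eq_append_append_of_append_eq_append_self hx hl

lemma eq_of_eval_eq_of_length_eq (hM : M.accepts = squares L) {v w : List α} (hw : w ∈ L)
    (h : M.eval v = M.eval w) (hl : v.length = w.length) : v = w := by
  obtain ⟨s, rfl⟩ := exists_eq_append_append_of_eval_eq hM hw h hl.le
  obtain rfl : s = [] := List.length_eq_zero_iff.1 (by simp at hl; omega)
  simp

lemma append_comm_of_eval_eq (hM : M.accepts = squares L) {s s' u : List α}
    (hs : s ++ u ++ s ∈ L) (hs' : s' ++ u ++ s' ∈ L)
    (h : M.eval (s ++ u ++ s) = M.eval (s' ++ u ++ s')) : s ++ s' = s' ++ s := by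
  rcases le_total (s ++ u ++ s).length (s' ++ u ++ s').length with hle | hle
  · obtain ⟨t, ht⟩ := exists_eq_append_append_of_eval_eq hM hs' h hle
    exact append_comm_of_append_append_eq ht
  · obtain ⟨t, ht⟩ := exists_eq_append_append_of_eval_eq hM hs h.symm hle
    exact (append_comm_of_append_append_eq ht).symm

lemma eval_append_append_comm {x y : List α} (h : ∀ q, M.evalFrom q x = M.evalFrom q y)
    (u : List α) : M.eval (x ++ u ++ y) = M.eval (y ++ u ++ x) := by
  simp only [DFA.eval, DFA.evalFrom_of_append, h]

variable {T : Set (List α)} {q : σ}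

lemma exists_primitive_forall_eq_wpow_append_append_wpow (hM : M.accepts = squares L)
    (hTL : T ⊆ L) (hTq : ∀ v ∈ T, M.eval v = q) (hT : T.Nontrivial) {u : List α} (hu : u ∈ T)
    (hmin : ∀ v ∈ T, u.length ≤ v.length) :
    ∃ g, Primitive g ∧ ∀ v ∈ T, ∃ m, v = wpow g m ++ u ++ wpow g m := by
  have hshape : ∀ v ∈ T, ∃ s, v = s ++ u ++ s := fun v hv =>
    exists_eq_append_append_of_eval_eq hM (hTL hv) ((hTq u hu).trans (hTq v hv).symm) (hmin v hv)
  obtain ⟨v₀, hv₀, hne⟩ := hT.exists_ne u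
  obtain ⟨s₀, rfl⟩ := hshape v₀ hv₀
  have hs₀ : s₀ ≠ [] := by
    rintro rfl
    simp at hne
  obtain ⟨g, k, hg, hk, rfl⟩ := exists_primitive_wpow_eq hs₀
  refine ⟨g, hg, fun v hv => ?_⟩
  obtain ⟨s, rfl⟩ := hshape v hv
  have hcomm := append_comm_of_eval_eq hM (hTL hv) (hTL hv₀) ((hTq _ hv).trans (hTq _ hv₀).symm)
  obtain ⟨m, rfl⟩ := hg.exists_eq_wpow_of_append_comm hk hcomm
  exact ⟨m, rfl⟩

theorem exists_primitive_forall_eq_wpow [Finite σ] (hM : M.accepts = squares L)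
    (hTL : T ⊆ L) (hTq : ∀ v ∈ T, M.eval v = q) (hT : T.Infinite) :
    ∃ g, Primitive g ∧ ∀ v ∈ T, ∃ n, v = wpow g n := by
  obtain ⟨u, hu, hmin⟩ : ∃ u ∈ T, ∀ v ∈ T, u.length ≤ v.length :=
    ⟨_, Function.argminOn_mem _ _ hT.nonempty, fun v hv => Function.argminOn_le _ _ hv⟩
  obtain ⟨g, hg, hshape⟩ :=
    exists_primitive_forall_eq_wpow_append_append_wpow hM hTL hTq hT.nontrivial hu hmin
  set A : Set ℕ := {m | wpow g m ++ u ++ wpow g m ∈ T}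
  have hA : A.Infinite := fun hA => hT <| (hA.image fun m => wpow g m ++ u ++ wpow g m).subset
    fun v hv => by obtain ⟨m, rfl⟩ := hshape v hv; exact ⟨m, hv, rfl⟩
  have hmixed : ∀ a ∈ A, ∀ b ∈ A, wpow g a ++ u ++ wpow g b ∈ L := by
    intro a ha b hb
    obtain ⟨x, hx, hsq⟩ :=
      exists_append_eq_append_self_of_eval_eq hM (hTL hb) ((hTq _ ha).trans (hTq _ hb).symm)
    rwa [append_self_injective ((wpow_append_append_wpow_sq g u a b).symm.trans hsq)]
  -- `M` has finitely many state transformations `σ → σ`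
  obtain ⟨a, ha, b, hb, hab, htrans⟩ := hA.exists_ne_map_eq_of_mapsTo
    (f := fun m q => M.evalFrom q (wpow g m)) (Set.mapsTo_univ _ _) Set.finite_univ
  have hswap : wpow g a ++ u ++ wpow g b = wpow g b ++ u ++ wpow g a :=
    eq_of_eval_eq_of_length_eq hM (hmixed b hb a ha) (eval_append_append_comm (congrFun htrans) u)
      (by simp only [List.length_append, length_wpow]; omega)
  obtain ⟨Δ, hΔ, hcomm⟩ : ∃ Δ, 0 < Δ ∧ u ++ wpow g Δ = wpow g Δ ++ u := by
    rcases hab.lt_or_gt with h | h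
    · exact ⟨b - a, by omega, append_wpow_comm_of_wpow_append_append_wpow_eq h.le hswap⟩
    · exact ⟨a - b, by omega, append_wpow_comm_of_wpow_append_append_wpow_eq h.le hswap.symm⟩
  obtain ⟨e, rfl⟩ := hg.exists_eq_wpow_of_append_comm hΔ hcomm
  refine ⟨g, hg, fun v hv => ?_⟩
  obtain ⟨m, rfl⟩ := hshape v hv
  exact ⟨m + e + m, by rw [wpow_add, wpow_add]⟩

end Automaton

theorem square_not_regular_general {α : Type*} (L : Language α)
    (hroot : Set.Infinite (langRoot L)) :
    ¬ Language.IsRegular ({w : List α | ∃ p ∈ L, w = p ++ p} : Language α) := by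
  rintro ⟨σ, _, M, hM⟩
  obtain ⟨q, hq⟩ := exists_langRoot_fiber_infinite M.eval hroot
  obtain ⟨g, hg, hpow⟩ := exists_primitive_forall_eq_wpow (T := {u ∈ L | M.eval u = q}) hM
    (fun _ hu => hu.1) (fun _ hu => hu.2) (fun hfin => hq (langRoot_finite hfin))
  exact hq (langRoot_subsingleton hg hpow).finite

/-- If `L` is a regular language with infinite root, then its square
`L⁽²⁾ = {pp : p ∈ L}` is not regular. -/
theorem square_not_regular {α : Type*} (L : Language α)
    (hL : L.IsRegular) (hroot : Set.Infinite (langRoot L)) :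
    ¬ Language.IsRegular ({w : List α | ∃ p ∈ L, w = p ++ p} : Language α) :=
  square_not_regular_general L hroot
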